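/- Let X be a Hadamard manifold with K_X ≤ -1, x ∈ X, ζ ∈ X(∞), and let V_ζ(x,R) ⊆ X(∞) be the spherical cap of points whose projection onto the ray [x,ζ[ lies at distance ≥ R from x. Then there is a universal constant ε (depending only on the curvature bound) such that |b_η(x, xζ(R)) - R| ≤ ε for all η ∈ V_ζ(x,R), where xζ(R) is the point at distance R from x on [x,ζ[. -/
import Mathlib


open Filter

/-- An abstract model of a CAT(-1) Hadamard manifold together with its ideal
boundary: a geodesic metric space satisfying the CAT(-1) comparison inequality
(in hyperbolic law-of-cosines form), equipped with unit-speed geodesic rays to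
boundary points, Busemann cocycles and Gromov products of boundary points,
both obtained as limits along rays. -/
structure CATm1Boundary where
  X : Type
  [inst : MetricSpace X]
  /-- CAT(-1) comparison inequality for a point `m` on a geodesic from `y` to `z`. -/
  comparison : ∀ x y z m : X, dist y m + dist m z = dist y z →
    Real.cosh (dist x m) * Real.sinh (dist y z) ≤
      Real.cosh (dist x y) * Real.sinh (dist m z) +
        Real.cosh (dist x z) * Real.sinh (dist y m)
  /-- midpoints exist (`X` is a geodesic space). -/
  mid : ∀ y z : X, ∃ m : X, dist y m = dist y z / 2 ∧ dist m z = dist y z / 2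
  /-- the ideal boundary `X(∞)`. -/
  bdry : Type
  /-- `ray x ξ` is the unit-speed geodesic ray from `x` to the boundary point `ξ`. -/
  ray : X → bdry → ℝ → X
  ray_zero : ∀ x ξ, ray x ξ 0 = x
  ray_isom : ∀ x ξ s t, 0 ≤ s → 0 ≤ t → dist (ray x ξ s) (ray x ξ t) = |s - t|
  /-- the Busemann cocycle `b_ξ(x,y) = lim_{z→ξ} d(x,z) - d(z,y)`. -/
  bus : bdry → X → X → ℝ
  bus_lim : ∀ (ξ : bdry) (x y z : X),
    Tendsto (fun t => dist x (ray z ξ t) - dist (ray z ξ t) y) atTop (nhds (bus ξ x y))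
  /-- the Gromov product `(ξ|η)_x` of two distinct boundary points. -/
  gp : X → bdry → bdry → ℝ
  gp_lim : ∀ (x : X) (ξ η : bdry), ξ ≠ η →
    Tendsto (fun t => t - dist (ray x ξ t) (ray x η t) / 2) atTop (nhds (gp x ξ η))

attribute [instance] CATm1Boundary.inst

open Classical in
/-- The visual distance `D_x(ξ,η) = exp (-(ξ|η)_x)` from `x` on the boundary. -/
noncomputable def CATm1Boundary.visDist (S : CATm1Boundary) (x : S.X) (ξ η : S.bdry) : ℝ :=
  if ξ = η then 0 else Real.exp (-(S.gp x ξ η))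

/-- The spherical cap `V_ζ(x,R)`: boundary points `η` whose projection on the
geodesic ray `[x,ζ[` falls beyond distance `R` from `x`.  Here `π x ζ y` is the
parameter of the nearest-point projection of `y ∈ X` on the ray `[x,ζ[`, and
the projection of the boundary point `η` is obtained along the ray `[x,η[`. -/
def CATm1Boundary.cap (S : CATm1Boundary) (π : S.X → S.bdry → S.X → ℝ)
    (x : S.X) (ζ : S.bdry) (R : ℝ) : Set S.bdry :=
  {η | ∀ᶠ t in atTop, R ≤ π x ζ (S.ray x η t)}

/-- `π x ζ y` is a nearest-point projection parameter of `y` on the ray `[x,ζ[`. -/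
def IsProjection (S : CATm1Boundary) (π : S.X → S.bdry → S.X → ℝ) : Prop :=
  ∀ (x : S.X) (ζ : S.bdry) (y : S.X),
    0 ≤ π x ζ y ∧ ∀ s : ℝ, 0 ≤ s → dist y (S.ray x ζ (π x ζ y)) ≤ dist y (S.ray x ζ s)

/-- Distance from `x` along a ray. -/
lemma CATm1Boundary.dist_ray (S : CATm1Boundary) (x : S.X) (ξ : S.bdry) (t : ℝ)
    (ht : 0 ≤ t) : dist x (S.ray x ξ t) = t := by
  have h := S.ray_isom x ξ 0 t le_rfl ht
  rw [S.ray_zero] at h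
  rw [h, abs_of_nonpos (by linarith)]; ring

/-- The elementary hyperbolic-trig inequality `sinh(p - r) ≤ 2 e^{-r}(sinh p - sinh r)`
for `0 ≤ r ≤ p`. -/
lemma sinh_sub_le (p r : ℝ) (hr : 0 ≤ r) (hrp : r ≤ p) :
    Real.sinh (p - r) ≤ 2 * Real.exp (-r) * (Real.sinh p - Real.sinh r) := by
  rw [Real.sinh_eq, Real.sinh_eq, Real.sinh_eq]
  have h1 : Real.exp (p - r) = Real.exp p * Real.exp (-r) := by
    rw [← Real.exp_add]; ring_nf
  have h2 : Real.exp (-(p - r)) = Real.exp (-p) * Real.exp r := by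
    rw [← Real.exp_add]; ring_nf
  have e1 : Real.exp (-r) * Real.exp r = 1 := by rw [← Real.exp_add]; simp
  have e2 : Real.exp (-p) * Real.exp p = 1 := by rw [← Real.exp_add]; simp
  -- `e^{-2r} ≥ e^{-p-r}` and `cosh(p-r) ≥ 1` packaged by nlinarith
  have h3 : Real.exp (-p) ≤ Real.exp (-r) := Real.exp_le_exp.2 (by linarith)
  have h4 : Real.exp r ≤ Real.exp p := Real.exp_le_exp.2 hrp
  have h5 : Real.exp (p - r) + Real.exp (-(p - r)) ≥ 2 := by
    have := Real.add_one_le_exp (p - r)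
    have := Real.add_one_le_exp (-(p - r))
    linarith
  rw [h1, h2] at h5 ⊢
  have hposr : 0 < Real.exp (-r) := Real.exp_pos _
  have hposp : 0 < Real.exp (-p) := Real.exp_pos _
  nlinarith [mul_le_mul_of_nonneg_left h4 hposp.le, mul_le_mul_of_nonneg_left h3 hposr.le]

/-- Key geometric estimate: if the projection of `q` on the ray `[x,ζ[` lies beyond
parameter `R > 0`, then `d(q, xζ(R)) ≤ d(q,x) - R + log 4`. -/
lemma CATm1Boundary.dist_ray_point_le (S : CATm1Boundary) (π : S.X → S.bdry → S.X → ℝ)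
    (hπ : IsProjection S π) (x : S.X) (ζ : S.bdry) (R : ℝ) (hR : 0 < R)
    (q : S.X) (hq : R ≤ π x ζ q) :
    dist q (S.ray x ζ R) ≤ dist q x - R + Real.log 4 := by
  set p := π x ζ q with hpdef
  have hp0 : 0 ≤ p := (hπ x ζ q).1
  have hmin := (hπ x ζ q).2
  -- Step 1: the bound with `R'` strictly below `R`.
  have hstep : ∀ R', 0 ≤ R' → R' < R →
      dist q (S.ray x ζ R') ≤ dist q x - R' + Real.log 4 := by
    intro R' hR'0 hR'R
    have hR'p : R' < p := lt_of_lt_of_le hR'R hq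
    have d1 : dist x (S.ray x ζ R') = R' := S.dist_ray x ζ R' hR'0
    have d2 : dist x (S.ray x ζ p) = p := S.dist_ray x ζ p hp0
    have d3 : dist (S.ray x ζ R') (S.ray x ζ p) = p - R' := by
      rw [S.ray_isom x ζ R' p hR'0 hp0, abs_of_nonpos (by linarith)]; ring
    have hcomp := S.comparison q x (S.ray x ζ p) (S.ray x ζ R')
      (by rw [d1, d2, d3]; ring)
    rw [d1, d2, d3] at hcomp
    set b := dist q (S.ray x ζ R') with hbdef
    set D := dist q (S.ray x ζ p) with hDdef
    set t := dist q x with htdef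
    have hb0 : 0 ≤ b := dist_nonneg
    have ht0 : 0 ≤ t := dist_nonneg
    have hDb : D ≤ b := hmin R' hR'0
    have hcDb : Real.cosh D ≤ Real.cosh b := by
      rw [Real.cosh_le_cosh, abs_of_nonneg dist_nonneg, abs_of_nonneg dist_nonneg]
      exact hDb
    have hsinhR' : 0 ≤ Real.sinh R' := Real.sinh_nonneg_iff.2 hR'0
    -- cosh b * (sinh p - sinh R') ≤ cosh t * sinh (p - R')
    have hkey : Real.cosh b * (Real.sinh p - Real.sinh R') ≤
        Real.cosh t * Real.sinh (p - R') := by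
      nlinarith [mul_le_mul_of_nonneg_right hcDb hsinhR']
    have hdiff : 0 < Real.sinh p - Real.sinh R' :=
      sub_pos.2 (Real.sinh_lt_sinh.2 hR'p)
    have hsle := sinh_sub_le p R' hR'0 hR'p.le
    have hcosht : 0 < Real.cosh t := Real.cosh_pos t
    -- cosh b ≤ 2 e^{-R'} cosh t
    have hcb : Real.cosh b ≤ 2 * Real.exp (-R') * Real.cosh t := by
      have h2 : Real.cosh b * (Real.sinh p - Real.sinh R') ≤
          2 * Real.exp (-R') * Real.cosh t * (Real.sinh p - Real.sinh R') := by
        nlinarith [mul_le_mul_of_nonneg_left hsle hcosht.le]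
      exact le_of_mul_le_mul_right h2 hdiff
    -- cosh t ≤ e^t  and  e^b ≤ 2 cosh b
    have hct : Real.cosh t ≤ Real.exp t := by
      rw [Real.cosh_eq]
      have : Real.exp (-t) ≤ Real.exp t := Real.exp_le_exp.2 (by linarith)
      linarith
    have heb : Real.exp b ≤ 2 * Real.cosh b := by
      rw [Real.cosh_eq]
      have : 0 < Real.exp (-b) := Real.exp_pos _
      linarith
    have hfinal : Real.exp b ≤ Real.exp (Real.log 4 + t - R') := by
      have h4 : Real.exp (Real.log 4 + t - R') =
          4 * (Real.exp (-R') * Real.exp t) := by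
        rw [show Real.log 4 + t - R' = Real.log 4 + (t + -R') by ring, Real.exp_add,
          Real.exp_log (by norm_num), Real.exp_add]
        ring
      rw [h4]
      have h5 : 2 * Real.exp (-R') * Real.cosh t ≤ 2 * Real.exp (-R') * Real.exp t :=
        mul_le_mul_of_nonneg_left hct (by positivity)
      nlinarith
    have := Real.exp_le_exp.1 hfinal
    linarith
  -- Step 2: pass to the limit `R' → R`.
  refine le_of_forall_pos_le_add fun δ hδ => ?_
  set R' := max 0 (R - δ / 2) with hR'def
  have hR'0 : 0 ≤ R' := le_max_left _ _
  have hR'R : R' < R := by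
    rw [hR'def]; exact max_lt hR (by linarith)
  have hRR' : R - R' ≤ δ / 2 := by
    have : R - δ / 2 ≤ R' := le_max_right _ _
    linarith
  have h1 := hstep R' hR'0 hR'R
  have h2 : dist q (S.ray x ζ R) ≤ dist q (S.ray x ζ R') + (R - R') := by
    have h3 : dist (S.ray x ζ R') (S.ray x ζ R) = R - R' := by
      rw [S.ray_isom x ζ R' R hR'0 hR.le, abs_of_nonpos (by linarith)]; ring
    calc dist q (S.ray x ζ R) ≤ dist q (S.ray x ζ R') + dist (S.ray x ζ R') (S.ray x ζ R) :=
          dist_triangle _ _ _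
      _ = dist q (S.ray x ζ R') + (R - R') := by rw [h3]
  linarith

/-- there is a universal constant `ε` (depending only on the
curvature bound) such that for all `x`, `ζ` and `R > 0`, every `η` in the
spherical cap `V_ζ(x,R)` satisfies `|b_η(x, xζ(R)) - R| ≤ ε`, where `xζ(R)` is
the point at distance `R` from `x` on `[x,ζ[`. -/
theorem busemann_on_cap (S : CATm1Boundary) (π : S.X → S.bdry → S.X → ℝ)
    (hπ : IsProjection S π) :
    ∃ ε > (0:ℝ), ∀ (x : S.X) (ζ : S.bdry) (R : ℝ), 0 < R →
      ∀ η ∈ S.cap π x ζ R, |S.bus η x (S.ray x ζ R) - R| ≤ ε := by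
  refine ⟨Real.log 4, Real.log_pos (by norm_num), fun x ζ R hR η hη => ?_⟩
  set y := S.ray x ζ R with hy
  have hlim := S.bus_lim η x y x
  have hev : ∀ᶠ t in atTop, (0:ℝ) ≤ t ∧ R ≤ π x ζ (S.ray x η t) :=
    (eventually_ge_atTop 0).and hη
  -- upper bound: f t ≤ R always (for t ≥ 0)
  have hub : S.bus η x y ≤ R := by
    refine le_of_tendsto hlim ?_
    filter_upwards [eventually_ge_atTop (0:ℝ)] with t ht
    have h1 : dist x (S.ray x η t) = t := S.dist_ray x η t ht
    have h2 : dist x y = R := S.dist_ray x ζ R hR.le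
    have := dist_triangle x y (S.ray x η t)
    rw [h2, h1, dist_comm y (S.ray x η t)] at this
    linarith
  -- lower bound on the cap
  have hlb : R - Real.log 4 ≤ S.bus η x y := by
    refine ge_of_tendsto hlim ?_
    filter_upwards [hev] with t ⟨ht0, htp⟩
    have h1 : dist x (S.ray x η t) = t := S.dist_ray x η t ht0
    have h2 := S.dist_ray_point_le π hπ x ζ R hR (S.ray x η t) htp
    rw [dist_comm (S.ray x η t) x, h1] at h2
    rw [h1]
    linarith
  rw [abs_le]
  constructor <;> linarith
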